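/- arXiv:2307.14755 — 5 statements merged into one kernel-verified Lean document; each statement's English description precedes it below -/
import Mathlib

section
/- Assume the superquadratic parameter setting and set q := 2(k+α−1)/k and r := 2k'/k. Then 1 ≤ r < q < p and q/r < 2/r + 1 − 2/p. -/
/-!
Write `s := k + α + β - 1 = 2k'`, so that `r = s / k`, `q = 2 + 2(α - 1)/k` and `1 - 2/p = 2/n`.
After clearing denominators the four conditions become `1 ≤ α + β`, `β - α + 1 < k`,
`(α - 1)(n - 2) < 2k` and `(α - 1)n < s`. The first holds as `α ≥ 2` and `β > 0`; the other three
follow from `k > β - α + 1` together with `(α - 1)n < 2β`, which is the upper bound on `α`.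
-/

namespace Superquadratic

variable {n α β k : ℝ}

theorem sub_one_mul_lt_two_mul (hn : 0 < n) (hα : α < 1 + 2 * β / n) : (α - 1) * n < 2 * β :=
  (lt_div_iff₀ hn).mp (by linarith)

theorem one_sub_two_div_sobolev_exponent (hn : n ≠ 0) : 1 - 2 / (2 * n / (n - 2)) = 2 / n := by
  rw [div_div_eq_mul_div, mul_div_mul_left _ _ two_ne_zero, one_sub_div hn]
  ring

theorem one_le_r (hk : 0 < k) (hαβ : 1 ≤ α + β) : 1 ≤ (k + α + β - 1) / k := by
  rw [le_div_iff₀ hk]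
  linarith

theorem r_lt_q (hk : 0 < k) (hkβ : β - α + 1 < k) : (k + α + β - 1) / k < 2 * (k + α - 1) / k := by
  rw [div_lt_div_iff_of_pos_right hk]
  linarith

theorem q_lt_p (hk : 0 < k) (hn : 2 < n) (h : (α - 1) * (n - 2) < 2 * k) :
    2 * (k + α - 1) / k < 2 * n / (n - 2) := by
  rw [div_lt_div_iff₀ hk (by linarith)]
  linarith

theorem q_div_r_lt (hk : 0 < k) (hn : 0 < n) (hs : 0 < k + α + β - 1)
    (h : (α - 1) * n < k + α + β - 1) :
    2 * (k + α - 1) / k / ((k + α + β - 1) / k)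
      < 2 / ((k + α + β - 1) / k) + 1 - 2 / (2 * n / (n - 2)) := by
  have hq : 2 * (k + α - 1) / k / ((k + α + β - 1) / k)
      = 2 * k / (k + α + β - 1) + 2 * (α - 1) / (k + α + β - 1) := by
    field_simp
    ring
  have hr : 2 / ((k + α + β - 1) / k) = 2 * k / (k + α + β - 1) := by
    field_simp
  rw [hq, hr, add_sub_assoc (2 * k / (k + α + β - 1)), one_sub_two_div_sobolev_exponent hn.ne', add_lt_add_iff_left,
    div_lt_div_iff₀ hs hn]
  linarith

end Superquadratic

/-- In the superquadratic setting, with `q := 2(k+α−1)/k` and `r := 2k'/k`, the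
Gagliardo–Nirenberg admissibility conditions `1 ≤ r < q < p` and
`q/r < 2/r + 1 − 2/p` hold. -/
theorem stmt_5 (n : ℕ) (hn : 3 ≤ n) (α β k p k' q r : ℝ)
    (hβ : (n : ℝ) / 2 < β) (hα2 : 2 ≤ α) (hα : α < 1 + 2 * β / n)
    (hk : max (β - α + 1) 1 < k)
    (hp : p = 2 * n / (n - 2))
    (hk' : k' = (k + α + β - 1) / 2)
    (hq : q = 2 * (k + α - 1) / k)
    (hr : r = 2 * k' / k) :
    1 ≤ r ∧ r < q ∧ q < p ∧ q / r < 2 / r + 1 - 2 / p := by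
  have hn3 : (3 : ℝ) ≤ n := by exact_mod_cast hn
  have hk1 : 1 < k := (le_max_right _ _).trans_lt hk
  have hkβ : β - α + 1 < k := (le_max_left _ _).trans_lt hk
  have hαn : (α - 1) * n < 2 * β := Superquadratic.sub_one_mul_lt_two_mul (by linarith) hα
  have hrs : r = (k + α + β - 1) / k := by rw [hr, hk']; ring
  subst hp hq hrs
  open Superquadratic in
  exact ⟨one_le_r (by linarith) (by linarith), r_lt_q (by linarith) hkβ,
    q_lt_p (by linarith) (by linarith) (by linarith),
    q_div_r_lt (by linarith) (by linarith) (by linarith) (by linarith)⟩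
end

section
/- Assume the subquadratic parameter setting and set q := 2(k+1)/k, r := 2k'/k, λ := (1/r − 1/q)/(1/r − 1/p), γ := 2(1−λ)q/(2−λq), a₂ := β/(k+α+β−1) and b₂ := k'γ/r. Then a₂·b₂/β < 1 (equivalently, kγ < 4k'). -/
/-!
Writing `a = 1/r`, `b = 1/q`, `c = 1/p`, the Young exponent is
`γ = 2(b - c) / (2b(a - c) - (a - b))`. With `r = 2k'/k`, `q = 2(k+1)/k`, `p = 2n/(n-2)` this gives
`kγ = 2k'(2k - n + 2)/(2k' - n)`, and since `k + α + β - 1 = 2k'` also `a₂b₂/β = kγ/(4k')`.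
So the claim reads `2k - n + 2 < 2(2k' - n)`, i.e. `n + 4 < 2(α + β)`, which is the hypothesis on `β`.
-/

lemma young_exponent_eq {r q p lam : ℝ} (hr : r ≠ 0) (hq : q ≠ 0) (hp : p ≠ 0) (hrp : r ≠ p)
    (hlam : lam = (1 / r - 1 / q) / (1 / r - 1 / p)) :
    2 * (1 - lam) * q / (2 - lam * q)
      = 2 * (q⁻¹ - p⁻¹) / (2 * q⁻¹ * (r⁻¹ - p⁻¹) - (r⁻¹ - q⁻¹)) := by
  have hlq : 2 - lam * q = q * (2 * q⁻¹ * (r⁻¹ - p⁻¹) - (r⁻¹ - q⁻¹)) / (r⁻¹ - p⁻¹) := by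
    rw [hlam, one_div, one_div, one_div]
    field_simp
  have hl : 1 - lam = (q⁻¹ - p⁻¹) / (r⁻¹ - p⁻¹) := by
    rw [hlam, one_div, one_div, one_div]
    field_simp
    ring
  rw [hlq, hl]
  field_simp

lemma mul_young_exponent_div_eq {n k k' q r p lam gam : ℝ} (hn : 2 < n) (hk : 0 < k) (hk' : 0 < k')
    (hkn : k' * (n - 2) < k * n)
    (hq : q = 2 * (k + 1) / k) (hr : r = 2 * k' / k) (hp : p = 2 * n / (n - 2))
    (hlam : lam = (1 / r - 1 / q) / (1 / r - 1 / p))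
    (hgam : gam = 2 * (1 - lam) * q / (2 - lam * q)) :
    k * gam / (4 * k') = (2 * k - n + 2) / (2 * (2 * k' - n)) := by
  have hr' : r⁻¹ = k / (2 * k') := by rw [hr, inv_div]
  have hq' : q⁻¹ = k / (2 * (k + 1)) := by rw [hq, inv_div]
  have hp' : p⁻¹ = (n - 2) / (2 * n) := by rw [hp, inv_div]
  have hrp : r ≠ p := by
    rw [← inv_injective.ne_iff, hr', hp', Ne, div_eq_div_iff (by positivity) (by positivity)]
    nlinarith
  have hden : 2 * q⁻¹ * (r⁻¹ - p⁻¹) - (r⁻¹ - q⁻¹)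
      = k * (2 * k' - n) / (2 * k' * n * (k + 1)) := by
    rw [hr', hq', hp']
    field_simp
    ring
  have hr0 : r ≠ 0 := by rw [hr]; positivity
  have hq0 : q ≠ 0 := by rw [hq]; positivity
  have hp0 : p ≠ 0 := by
    rw [hp]
    have : 0 < n - 2 := by linarith
    positivity
  rw [hgam, young_exponent_eq hr0 hq0 hp0 hrp hlam, hden, hq', hp']
  field_simp
  ring

theorem stmt_10_general (n : ℕ) (hn : 3 ≤ n) (α β k p k' q r lam gam a₂ b₂ : ℝ)
    (hα2 : α < 2) (hβ : (n + 4 : ℝ) / 2 - α < β)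
    (hk : max 1 (1 - α + β) < k)
    (hp : p = 2 * n / (n - 2))
    (hk' : k' = (k + α + β - 1) / 2)
    (hq : q = 2 * (k + 1) / k)
    (hr : r = 2 * k' / k)
    (hlam : lam = (1 / r - 1 / q) / (1 / r - 1 / p))
    (hgam : gam = 2 * (1 - lam) * q / (2 - lam * q))
    (ha₂ : a₂ = β / (k + α + β - 1))
    (hb₂ : b₂ = k' * gam / r) :
    a₂ * b₂ / β < 1 := by
  have hn2 : (2 : ℝ) < n := by norm_cast
  have hk0 : 0 < k := by linarith [(le_max_left _ _).trans_lt hk]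
  have hkβ : 1 - α + β < k := (le_max_right _ _).trans_lt hk
  have hβ0 : 0 < β := by linarith
  have hk'n : (n : ℝ) < 2 * k' := by rw [hk']; linarith
  have hk'0 : 0 < k' := by linarith
  -- `k(n + 2) - (α + β - 1)(n - 2) > 2(2 - α)(n + 2) ≥ 0`
  have hkn : k' * (n - 2) < k * n := by rw [hk']; nlinarith
  have ha₂b₂ : a₂ * b₂ / β = k * gam / (4 * k') := by
    rw [ha₂, hb₂, hr, show k + α + β - 1 = 2 * k' by rw [hk']; ring]
    field_simp
    ring
  rw [ha₂b₂, mul_young_exponent_div_eq hn2 hk0 hk'0 hkn hq hr hp hlam hgam,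
    div_lt_one (by linarith), hk']
  linarith

/-- In the subquadratic setting, the Young-inequality exponent condition
`a₂·b₂/β < 1` holds. -/
theorem stmt_10 (n : ℕ) (hn : 3 ≤ n) (α β k p k' q r lam gam a₂ b₂ : ℝ)
    (hα1 : 1 ≤ α) (hα2 : α < 2) (hβ : (n + 4 : ℝ) / 2 - α < β)
    (hk : max 1 (1 - α + β) < k)
    (hp : p = 2 * n / (n - 2))
    (hk' : k' = (k + α + β - 1) / 2)
    (hq : q = 2 * (k + 1) / k)
    (hr : r = 2 * k' / k)
    (hlam : lam = (1 / r - 1 / q) / (1 / r - 1 / p))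
    (hgam : gam = 2 * (1 - lam) * q / (2 - lam * q))
    (ha₂ : a₂ = β / (k + α + β - 1))
    (hb₂ : b₂ = k' * gam / r) :
    a₂ * b₂ / β < 1 :=
  stmt_10_general n hn α β k p k' q r lam gam a₂ b₂ hα2 hβ hk hp hk' hq hr hlam hgam ha₂ hb₂
end

section
/- Assume the superquadratic parameter setting, let Ω ⊆ ℝⁿ be a measurable set, and set q := 2(k+α−1)/k, r := 2k'/k, λ := (1/r − 1/q)/(1/r − 1/p) and γ := 2(1−λ)q/(2−λq). Then for all c, b > 0 there exists C > 0 such that for every measurable u : Ω → [0,∞) with u^β and u^{k+α−1} Lebesgue integrable on Ω, one has c·(∫_Ω u^{k'})^{γ/r} ≤ k·b·(∫_Ω u^{k+α−1})·(∫_Ω u^β) + C. -/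
open MeasureTheory Real Set

/-!
Since `k' = (β + (k + α - 1)) / 2`, Cauchy–Schwarz applied to `u^(β/2) · u^((k+α-1)/2)` gives
`(∫ u^k')² ≤ (∫ u^β)(∫ u^(k+α-1))`. Hence the left-hand side is at most `c X^θ` with
`X = (∫ u^β)(∫ u^(k+α-1))` and `θ = γ / (2r)`. A computation of the exponents gives
`γ / r = (2k - (n-2)(α-1)) / (k + β - (n-1)(α-1)) ∈ (0, 2)`, so `θ < 1` and Young's inequality
absorbs `c X^θ` into `k b X` plus a constant.
-/

theorem exists_mul_rpow_le_mul_add {θ c d : ℝ} (hθ0 : 0 < θ) (hθ1 : θ < 1) (hc : 0 < c)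
    (hd : 0 < d) : ∃ C : ℝ, 0 < C ∧ ∀ X : ℝ, 0 ≤ X → c * X ^ θ ≤ d * X + C := by
  set t := d / θ
  set s := (c / t ^ θ) ^ (1 - θ)⁻¹
  have ht : 0 < t := by positivity
  have hs : s ^ (1 - θ) = c / t ^ θ := rpow_inv_rpow (by positivity) (by linarith)
  refine ⟨(1 - θ) * s, mul_pos (by linarith) (by positivity), fun X hX => ?_⟩
  have amgm := geom_mean_le_arith_mean2_weighted hθ0.le (by linarith : 0 ≤ 1 - θ)
    (by positivity : 0 ≤ t * X) (by positivity : 0 ≤ s) (by ring)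
  calc c * X ^ θ = (t * X) ^ θ * s ^ (1 - θ) := by
        rw [hs, mul_rpow ht.le hX]; field_simp
    _ ≤ θ * (t * X) + (1 - θ) * s := amgm
    _ = d * X + (1 - θ) * s := by simp only [t]; field_simp

theorem sq_integral_rpow_add_half_le {Y : Type*} [MeasurableSpace Y] {μ : Measure Y}
    {u : Y → ℝ} (hu : AEMeasurable u μ) (hu0 : 0 ≤ᵐ[μ] u) {a b : ℝ} (ha : 0 ≤ a) (hb : 0 ≤ b)
    (hia : Integrable (fun x => u x ^ a) μ) (hib : Integrable (fun x => u x ^ b) μ) :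
    (∫ x, u x ^ ((a + b) / 2) ∂μ) ^ 2 ≤ (∫ x, u x ^ a ∂μ) * ∫ x, u x ^ b ∂μ := by
  have half_sq : ∀ e : ℝ, (fun x => (u x ^ (e / 2)) ^ (2 : ℝ)) =ᵐ[μ] fun x => u x ^ e := by
    intro e
    filter_upwards [hu0] with x hx
    rw [← rpow_mul hx, div_mul_cancel₀ e two_ne_zero]
  have memLp_half : ∀ e : ℝ, Integrable (fun x => u x ^ e) μ →
      MemLp (fun x => u x ^ (e / 2)) (ENNReal.ofReal 2) μ := by
    intro e he
    have hm : AEStronglyMeasurable (fun x => u x ^ (e / 2)) μ :=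
      (hu.pow_const _).aestronglyMeasurable
    rw [ENNReal.ofReal_ofNat, memLp_two_iff_integrable_sq hm]
    refine he.congr ((half_sq e).symm.trans ?_)
    filter_upwards with x
    exact rpow_two _
  have nonneg_half : ∀ e : ℝ, 0 ≤ᵐ[μ] fun x => u x ^ (e / 2) := fun e =>
    hu0.mono fun x hx => rpow_nonneg hx _
  have holder := integral_mul_le_Lp_mul_Lq_of_nonneg HolderConjugate.two_two
    (nonneg_half a) (nonneg_half b) (memLp_half a hia) (memLp_half b hib)
  have hprod : ∫ x, u x ^ (a / 2) * u x ^ (b / 2) ∂μ = ∫ x, u x ^ ((a + b) / 2) ∂μ := by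
    refine integral_congr_ae ?_
    filter_upwards [hu0] with x hx
    rw [← rpow_add_of_nonneg hx (by linarith) (by linarith), add_div]
  rw [hprod, integral_congr_ae (half_sq a), integral_congr_ae (half_sq b)] at holder
  have hA : 0 ≤ ∫ x, u x ^ a ∂μ := integral_nonneg_of_ae (hu0.mono fun x hx => rpow_nonneg hx _)
  have hB : 0 ≤ ∫ x, u x ^ b ∂μ := integral_nonneg_of_ae (hu0.mono fun x hx => rpow_nonneg hx _)
  have hI : 0 ≤ ∫ x, u x ^ ((a + b) / 2) ∂μ :=
    integral_nonneg_of_ae (hu0.mono fun x hx => rpow_nonneg hx _)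
  calc (∫ x, u x ^ ((a + b) / 2) ∂μ) ^ 2
      ≤ ((∫ x, u x ^ a ∂μ) ^ (1 / 2 : ℝ) * (∫ x, u x ^ b ∂μ) ^ (1 / 2 : ℝ)) ^ 2 :=
        pow_le_pow_left₀ hI holder 2
    _ = (∫ x, u x ^ a ∂μ) * ∫ x, u x ^ b ∂μ := by
        rw [mul_pow, ← rpow_natCast, ← rpow_natCast, ← rpow_mul hA, ← rpow_mul hB]
        norm_num

section SuperquadraticExponents

variable {ν α β k p k' q r lam gam : ℝ}

theorem superquadratic_gam_div_r_eq (hν : 2 < ν) (hβ : 0 < β) (hα : α < 1 + 2 * β / ν)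
    (hk : β - α + 1 < k)
    (hp : p = 2 * ν / (ν - 2)) (hk' : k' = (k + α + β - 1) / 2) (hq : q = 2 * (k + α - 1) / k)
    (hr : r = 2 * k' / k) (hlam : lam = (1 / r - 1 / q) / (1 / r - 1 / p))
    (hgam : gam = 2 * (1 - lam) * q / (2 - lam * q)) :
    gam / r = (2 * k - (ν - 2) * (α - 1)) / (k + β - (ν - 1) * (α - 1)) := by
  have hν0 : 0 < ν := by linarith
  have hνα : ν * (α - 1) < 2 * β := by
    have := (lt_div_iff₀ hν0).mp (by linarith : α - 1 < 2 * β / ν)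
    linarith
  have hk0 : 0 < k := by nlinarith
  have hm0 : 0 < k + α - 1 := by linarith
  have hs0 : 0 < k + α + β - 1 := by linarith
  have hE : 0 < 2 * ν * k - (ν - 2) * (k + α + β - 1) := by nlinarith
  have hD : 0 < k + β - (ν - 1) * (α - 1) := by nlinarith
  have hlam' : lam = ν * k * ((k + α - 1) - β) /
      ((k + α - 1) * (2 * ν * k - (ν - 2) * (k + α + β - 1))) := by
    rw [hlam, hr, hq, hp, hk']
    field_simp
    ring
  have hlamq : 2 - lam * q = 4 * (k + β - (ν - 1) * (α - 1)) /
      (2 * ν * k - (ν - 2) * (k + α + β - 1)) := by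
    rw [hlam', hq]; field_simp; ring
  rw [hgam, hlamq, hlam', hq, hr, hk']
  field_simp
  ring

theorem superquadratic_gam_div_r_mem_Ioo (hν : 2 < ν) (hβ : 0 < β) (hα : α < 1 + 2 * β / ν)
    (hk : β - α + 1 < k)
    (hp : p = 2 * ν / (ν - 2)) (hk' : k' = (k + α + β - 1) / 2) (hq : q = 2 * (k + α - 1) / k)
    (hr : r = 2 * k' / k) (hlam : lam = (1 / r - 1 / q) / (1 / r - 1 / p))
    (hgam : gam = 2 * (1 - lam) * q / (2 - lam * q)) :
    gam / r ∈ Ioo 0 2 := by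
  have hνα : ν * (α - 1) < 2 * β := by
    have := (lt_div_iff₀ (by linarith : 0 < ν)).mp (by linarith : α - 1 < 2 * β / ν)
    linarith
  have hD : 0 < k + β - (ν - 1) * (α - 1) := by linarith
  rw [superquadratic_gam_div_r_eq hν hβ hα hk hp hk' hq hr hlam hgam, mem_Ioo,
    div_lt_iff₀ hD]
  exact ⟨div_pos (by linarith) hD, by linarith⟩

end SuperquadraticExponents

theorem stmt_13_general (n : ℕ) (hn : 3 ≤ n) (α β k p k' q r lam gam : ℝ)
    (hβ : (n : ℝ) / 2 < β) (hα : α < 1 + 2 * β / n)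
    (hk : max (β - α + 1) 1 < k)
    (hp : p = 2 * n / (n - 2))
    (hk' : k' = (k + α + β - 1) / 2)
    (hq : q = 2 * (k + α - 1) / k)
    (hr : r = 2 * k' / k)
    (hlam : lam = (1 / r - 1 / q) / (1 / r - 1 / p))
    (hgam : gam = 2 * (1 - lam) * q / (2 - lam * q))
    (Ω : Set (Fin n → ℝ)) (hΩ : MeasurableSet Ω) :
    ∀ c b : ℝ, 0 < c → 0 < b → ∃ C : ℝ, 0 < C ∧
      ∀ u : (Fin n → ℝ) → ℝ, Measurable u → (∀ x ∈ Ω, 0 ≤ u x) →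
        IntegrableOn (fun x => u x ^ β) Ω →
        IntegrableOn (fun x => u x ^ (k + α - 1)) Ω →
        c * (∫ x in Ω, u x ^ k') ^ (gam / r) ≤
          k * b * (∫ x in Ω, u x ^ (k + α - 1)) * (∫ x in Ω, u x ^ β) + C := by
  intro c b hc hb
  have hn2 : (2 : ℝ) < n := by exact_mod_cast hn
  have hβ0 : 0 < β := by linarith
  have hkβ : β - α + 1 < k := (le_max_left _ _).trans_lt hk
  have hk0 : 0 < k := by linarith [le_max_right (β - α + 1) 1]
  obtain ⟨hθ0, hθ2⟩ :=
    superquadratic_gam_div_r_mem_Ioo hn2 hβ0 hα hkβ hp hk' hq hr hlam hgam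
  obtain ⟨C, hC, young⟩ := exists_mul_rpow_le_mul_add (θ := gam / r / 2) (by linarith)
    (by linarith) hc (mul_pos hk0 hb)
  refine ⟨C, hC, fun u hu hu0 hiβ him => ?_⟩
  have hu0' : 0 ≤ᵐ[volume.restrict Ω] u := ae_restrict_of_forall_mem hΩ hu0
  have cauchy_schwarz := sq_integral_rpow_add_half_le hu.aemeasurable hu0' hβ0.le
    (by linarith) hiβ him
  rw [show (β + (k + α - 1)) / 2 = k' by rw [hk']; ring] at cauchy_schwarz
  have hint_nonneg : ∀ e : ℝ, 0 ≤ ∫ x in Ω, u x ^ e := fun e =>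
    setIntegral_nonneg hΩ fun x hx => rpow_nonneg (hu0 x hx) _
  calc c * (∫ x in Ω, u x ^ k') ^ (gam / r)
      = c * ((∫ x in Ω, u x ^ k') ^ 2) ^ (gam / r / 2) := by
        rw [← rpow_natCast, ← rpow_mul (hint_nonneg k')]; congr 2; ring
    _ ≤ c * ((∫ x in Ω, u x ^ β) * ∫ x in Ω, u x ^ (k + α - 1)) ^ (gam / r / 2) := by
        gcongr
    _ ≤ k * b * ((∫ x in Ω, u x ^ β) * ∫ x in Ω, u x ^ (k + α - 1)) + C :=
        young _ (mul_nonneg (hint_nonneg β) (hint_nonneg _))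
    _ = k * b * (∫ x in Ω, u x ^ (k + α - 1)) * (∫ x in Ω, u x ^ β) + C := by ring

/-- Superquadratic interpolation/Young estimate: for all `c, b > 0` there is `C > 0` with
`c·(∫_Ω u^{k'})^{γ/r} ≤ k·b·(∫_Ω u^{k+α−1})·(∫_Ω u^β) + C`. -/
theorem stmt_13 (n : ℕ) (hn : 3 ≤ n) (α β k p k' q r lam gam : ℝ)
    (hβ : (n : ℝ) / 2 < β) (hα2 : 2 ≤ α) (hα : α < 1 + 2 * β / n)
    (hk : max (β - α + 1) 1 < k)
    (hp : p = 2 * n / (n - 2))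
    (hk' : k' = (k + α + β - 1) / 2)
    (hq : q = 2 * (k + α - 1) / k)
    (hr : r = 2 * k' / k)
    (hlam : lam = (1 / r - 1 / q) / (1 / r - 1 / p))
    (hgam : gam = 2 * (1 - lam) * q / (2 - lam * q))
    (Ω : Set (Fin n → ℝ)) (hΩ : MeasurableSet Ω) :
    ∀ c b : ℝ, 0 < c → 0 < b → ∃ C : ℝ, 0 < C ∧
      ∀ u : (Fin n → ℝ) → ℝ, Measurable u → (∀ x ∈ Ω, 0 ≤ u x) →
        IntegrableOn (fun x => u x ^ β) Ω →
        IntegrableOn (fun x => u x ^ (k + α - 1)) Ω →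
        c * (∫ x in Ω, u x ^ k') ^ (gam / r) ≤
          k * b * (∫ x in Ω, u x ^ (k + α - 1)) * (∫ x in Ω, u x ^ β) + C :=
  stmt_13_general n hn α β k p k' q r lam gam hβ hα hk hp hk' hq hr hlam hgam Ω hΩ
end

section
/- Assume the subquadratic parameter setting, let Ω ⊆ ℝⁿ be a measurable set, and set q := 2(k+1)/k, r := 2k'/k, λ := (1/r − 1/q)/(1/r − 1/p) and γ := 2(1−λ)q/(2−λq). Then for all c, b > 0 there exists C > 0 such that for every measurable u : Ω → [0,∞) with u^β and u^{k+α−1} Lebesgue integrable on Ω, one has c·(∫_Ω u^{k'})^{γ/r} ≤ k·b·(∫_Ω u^{k+α−1})·(∫_Ω u^β) + C. -/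
/-!
Since `k'` is the mean of `β` and `k + α - 1`, Cauchy–Schwarz gives
`(∫ u^k')² ≤ (∫ u^β) (∫ u^(k+α-1))`. The exponent simplifies to
`γ / r = 2 - (2(α + β) - n - 4) / (k + α + β - 1 - n)`, which the parameter assumptions
place in `(0, 2)`; so `t ↦ c t^(γ/(2r))` is sublinear and Young's inequality absorbs it
into `k b t + C`.
-/

open MeasureTheory Real Set

lemma exists_mul_rpow_le_mul_add_s14 {c ε s : ℝ} (hc : 0 < c) (hε : 0 < ε) (hs0 : 0 < s)
    (hs1 : s < 1) : ∃ C : ℝ, 0 < C ∧ ∀ t : ℝ, 0 ≤ t → c * t ^ s ≤ ε * t + C := by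
  -- Young with exponents `1/s`, `1/(1-s)` applied to `c t^s = (ε t / s)^s * (c / (ε / s)^s)`
  have hpq : (1 / s).HolderConjugate (1 / (1 - s)) := by
    rw [Real.holderConjugate_iff]; refine ⟨?_, by field_simp; ring⟩
    rw [lt_one_div one_pos hs0]; simpa using hs1
  have hδ : 0 < ε / s := by positivity
  set D := c / (ε / s) ^ s
  refine ⟨D ^ (1 / (1 - s)) / (1 / (1 - s)) + 1, by positivity, fun t ht => ?_⟩
  have hyoung := young_inequality_of_nonneg (rpow_nonneg (mul_nonneg hδ.le ht) s)
    (by positivity : 0 ≤ D) hpq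
  rw [← rpow_mul (by positivity), mul_one_div_cancel hs0.ne', rpow_one] at hyoung
  have hsplit : c * t ^ s = (ε / s * t) ^ s * D := by
    rw [mul_rpow hδ.le ht, mul_comm _ D, ← mul_assoc, div_mul_cancel₀ _ (by positivity)]
  have hlin : ε / s * t / (1 / s) = ε * t := by field_simp
  linarith

-- `a + b ≠ 0` rules out `0 ^ (a/2) * 0 ^ (-a/2) = 0 ≠ 0 ^ 0`.
lemma sq_integral_rpow_midpoint_le {X : Type*} [MeasurableSpace X] {μ : Measure X} {u : X → ℝ}
    {a b : ℝ} (hab : a + b ≠ 0) (hu : AEMeasurable u μ) (hu0 : 0 ≤ᵐ[μ] u)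
    (ha : Integrable (fun x => u x ^ a) μ) (hb : Integrable (fun x => u x ^ b) μ) :
    (∫ x, u x ^ ((a + b) / 2) ∂μ) ^ 2 ≤ (∫ x, u x ^ a ∂μ) * ∫ x, u x ^ b ∂μ := by
  have hL2 {e : ℝ} (he : Integrable (fun x => u x ^ e) μ) :
      MemLp (fun x => u x ^ (e / 2)) 2 μ := by
    refine (memLp_two_iff_integrable_sq (hu.pow_const _).aestronglyMeasurable).2 (he.congr ?_)
    filter_upwards [hu0] with x hx
    rw [← rpow_natCast, ← rpow_mul hx]; norm_num
  have hcs := integral_mul_le_Lp_mul_Lq_of_nonneg (p := 2) (q := 2)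
    (by rw [Real.holderConjugate_iff]; norm_num)
    (hu0.mono fun x hx => rpow_nonneg hx (a / 2)) (hu0.mono fun x hx => rpow_nonneg hx (b / 2))
    (by simpa using hL2 ha) (by simpa using hL2 hb)
  have hsq {e : ℝ} : ∫ x, (u x ^ (e / 2)) ^ (2 : ℝ) ∂μ = ∫ x, u x ^ e ∂μ := by
    refine integral_congr_ae (hu0.mono fun x hx => ?_)
    dsimp only; rw [← rpow_mul hx]; norm_num
  have hmul : ∫ x, u x ^ (a / 2) * u x ^ (b / 2) ∂μ = ∫ x, u x ^ ((a + b) / 2) ∂μ := by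
    refine integral_congr_ae (hu0.mono fun x hx => ?_)
    have hab' : a / 2 + b / 2 ≠ 0 := by
      rwa [← add_div, div_ne_zero_iff, and_iff_left two_ne_zero]
    dsimp only; rw [← rpow_add' hx hab']; ring_nf
  rw [hsq, hsq, hmul] at hcs
  have hnonneg (e : ℝ) : 0 ≤ ∫ x, u x ^ e ∂μ :=
    integral_nonneg_of_ae (hu0.mono fun x hx => rpow_nonneg hx _)
  calc (∫ x, u x ^ ((a + b) / 2) ∂μ) ^ 2
      ≤ ((∫ x, u x ^ a ∂μ) ^ (1 / 2 : ℝ) * (∫ x, u x ^ b ∂μ) ^ (1 / 2 : ℝ)) ^ 2 :=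
        pow_le_pow_left₀ (hnonneg _) hcs 2
    _ = (∫ x, u x ^ a ∂μ) * ∫ x, u x ^ b ∂μ := by
      rw [← sqrt_eq_rpow, ← sqrt_eq_rpow, mul_pow, sq_sqrt (hnonneg a), sq_sqrt (hnonneg b)]

lemma gam_div_r_eq {n α β k p k' q r lam gam : ℝ} (hn : 0 < n) (hk : 0 < k)
    (hE : n < k + α + β - 1) (hD : (n - 2) * (α + β - 1) < (n + 2) * k)
    (hp : p = 2 * n / (n - 2))
    (hk' : k' = (k + α + β - 1) / 2)
    (hq : q = 2 * (k + 1) / k)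
    (hr : r = 2 * k' / k)
    (hlam : lam = (1 / r - 1 / q) / (1 / r - 1 / p))
    (hgam : gam = 2 * (1 - lam) * q / (2 - lam * q)) :
    gam / r = 2 - (2 * (α + β) - n - 4) / (k + α + β - 1 - n) := by
  have hK : 0 < k + α + β - 1 := by linarith
  have hE' : 0 < k + α + β - 1 - n := by linarith
  obtain ⟨D, hD₀, hDdef⟩ : ∃ D, 0 < D ∧ (n + 2) * k - (n - 2) * (α + β - 1) = D :=
    ⟨_, by linarith, rfl⟩
  have hlam' : lam = n * k * (k + 3 - α - β) / ((k + 1) * D) := by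
    have hc : 1 / r - 1 / p = D / (2 * n * (k + α + β - 1)) := by
      rw [← hDdef, hr, hk', hp]; field_simp; ring
    rw [hlam, hc, hr, hk', hq]; field_simp; ring
  have h2lq : 2 - lam * q = 4 * (k + α + β - 1 - n) / D := by
    rw [hlam', hq]; field_simp; rw [← hDdef]; ring
  rw [hgam, h2lq, hlam', hq, hr, hk']
  field_simp
  rw [← hDdef]
  ring

lemma gam_div_r_mem_Ioo {n α β k p k' q r lam gam : ℝ} (hn : 0 < n)
    (hα : α < 2) (hβ : (n + 4) / 2 - α < β) (hk : max 1 (1 - α + β) < k)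
    (hp : p = 2 * n / (n - 2))
    (hk' : k' = (k + α + β - 1) / 2)
    (hq : q = 2 * (k + 1) / k)
    (hr : r = 2 * k' / k)
    (hlam : lam = (1 / r - 1 / q) / (1 / r - 1 / p))
    (hgam : gam = 2 * (1 - lam) * q / (2 - lam * q)) :
    gam / r ∈ Ioo 0 2 := by
  obtain ⟨hk1, hkβ⟩ := max_lt_iff.1 hk
  have hE : n < k + α + β - 1 := by linarith
  have hD : (n - 2) * (α + β - 1) < (n + 2) * k := by
    nlinarith [mul_pos (by linarith : (0 : ℝ) < n + 2) (by linarith : 0 < k - (1 - α + β)),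
      mul_pos (by linarith : (0 : ℝ) < n + 2) (by linarith : 0 < 2 - α)]
  rw [gam_div_r_eq hn (by linarith) hE hD hp hk' hq hr hlam hgam]
  have hE' : 0 < k + α + β - 1 - n := by linarith
  constructor
  · rw [sub_pos, div_lt_iff₀ hE']; linarith
  · rw [sub_lt_self_iff]; exact div_pos (by linarith) hE'

theorem stmt_14_general (n : ℕ) (hn : 3 ≤ n) (α β k p k' q r lam gam : ℝ)
    (hα2 : α < 2) (hβ : (n + 4 : ℝ) / 2 - α < β)
    (hk : max 1 (1 - α + β) < k)
    (hp : p = 2 * n / (n - 2))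
    (hk' : k' = (k + α + β - 1) / 2)
    (hq : q = 2 * (k + 1) / k)
    (hr : r = 2 * k' / k)
    (hlam : lam = (1 / r - 1 / q) / (1 / r - 1 / p))
    (hgam : gam = 2 * (1 - lam) * q / (2 - lam * q))
    (Ω : Set (Fin n → ℝ)) :
    ∀ c b : ℝ, 0 < c → 0 < b → ∃ C : ℝ, 0 < C ∧
      ∀ u : (Fin n → ℝ) → ℝ, Measurable u → (∀ x ∈ Ω, 0 ≤ u x) →
        IntegrableOn (fun x => u x ^ β) Ω →
        IntegrableOn (fun x => u x ^ (k + α - 1)) Ω →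
        c * (∫ x in Ω, u x ^ k') ^ (gam / r) ≤
          k * b * (∫ x in Ω, u x ^ (k + α - 1)) * (∫ x in Ω, u x ^ β) + C := by
  intro c b hc hb
  have hn0 : (0 : ℝ) < n := by exact_mod_cast (by omega : 0 < n)
  obtain ⟨hk1, hkβ⟩ := max_lt_iff.1 hk
  obtain ⟨he0, he2⟩ := gam_div_r_mem_Ioo hn0 hα2 hβ hk hp hk' hq hr hlam hgam
  obtain ⟨C, hC, hyoung⟩ := exists_mul_rpow_le_mul_add_s14 hc (mul_pos (by linarith : 0 < k) hb)
    (half_pos he0) (by linarith : gam / r / 2 < 1)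
  refine ⟨C, hC, fun u hu hu0 hIβ hIα => ?_⟩
  have hu_ae : 0 ≤ᵐ[volume.restrict Ω] u :=
    (ae_restrict_iff (measurableSet_le measurable_const hu)).2 (ae_of_all _ hu0)
  have hcs := sq_integral_rpow_midpoint_le (by linarith) hu.aemeasurable hu_ae hIβ hIα
  rw [show (β + (k + α - 1)) / 2 = k' by rw [hk']; ring] at hcs
  have hnonneg (e : ℝ) : 0 ≤ ∫ x in Ω, u x ^ e :=
    integral_nonneg_of_ae (hu_ae.mono fun x hx => rpow_nonneg hx _)
  calc c * (∫ x in Ω, u x ^ k') ^ (gam / r)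
      = c * ((∫ x in Ω, u x ^ k') ^ 2) ^ (gam / r / 2) := by
        rw [← rpow_natCast, ← rpow_mul (hnonneg _)]; ring_nf
    _ ≤ c * ((∫ x in Ω, u x ^ β) * ∫ x in Ω, u x ^ (k + α - 1)) ^ (gam / r / 2) := by
        gcongr
    _ ≤ k * b * ((∫ x in Ω, u x ^ β) * ∫ x in Ω, u x ^ (k + α - 1)) + C :=
        hyoung _ (mul_nonneg (hnonneg _) (hnonneg _))
    _ = k * b * (∫ x in Ω, u x ^ (k + α - 1)) * (∫ x in Ω, u x ^ β) + C := by ring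

/-- Subquadratic interpolation/Young estimate: for all `c, b > 0` there is `C > 0` with
`c·(∫_Ω u^{k'})^{γ/r} ≤ k·b·(∫_Ω u^{k+α−1})·(∫_Ω u^β) + C`. -/
theorem stmt_14 (n : ℕ) (hn : 3 ≤ n) (α β k p k' q r lam gam : ℝ)
    (hα1 : 1 ≤ α) (hα2 : α < 2) (hβ : (n + 4 : ℝ) / 2 - α < β)
    (hk : max 1 (1 - α + β) < k)
    (hp : p = 2 * n / (n - 2))
    (hk' : k' = (k + α + β - 1) / 2)
    (hq : q = 2 * (k + 1) / k)
    (hr : r = 2 * k' / k)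
    (hlam : lam = (1 / r - 1 / q) / (1 / r - 1 / p))
    (hgam : gam = 2 * (1 - lam) * q / (2 - lam * q))
    (Ω : Set (Fin n → ℝ)) (hΩ : MeasurableSet Ω) :
    ∀ c b : ℝ, 0 < c → 0 < b → ∃ C : ℝ, 0 < C ∧
      ∀ u : (Fin n → ℝ) → ℝ, Measurable u → (∀ x ∈ Ω, 0 ≤ u x) →
        IntegrableOn (fun x => u x ^ β) Ω →
        IntegrableOn (fun x => u x ^ (k + α - 1)) Ω →
        c * (∫ x in Ω, u x ^ k') ^ (gam / r) ≤
          k * b * (∫ x in Ω, u x ^ (k + α - 1)) * (∫ x in Ω, u x ^ β) + C :=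
  stmt_14_general n hn α β k p k' q r lam gam hα2 hβ hk hp hk' hq hr hlam hgam Ω
end

section
/- Let n ≥ 3 be an integer, set p := 2n/(n−2), and let q, r be reals with 1 ≤ r < q < p and q/r < 2/r + 1 − 2/p; set λ := (1/r − 1/q)/(1/r − 1/p) and γ := 2(1−λ)q/(2−λq). Then for all ε₁, ε₂ > 0 there exists C₀ = C₀(ε₁, ε₂) > 0 such that for every continuously differentiable, compactly supported function φ : ℝⁿ → [0,∞) one has ‖φ‖_{L^q(ℝⁿ)}^q ≤ C₀·‖φ‖_{L^r(ℝⁿ)}^γ + ε₁·‖∇φ‖_{L^2(ℝⁿ)}^2 + ε₂·‖φ‖_{L^2(ℝⁿ)}^2. -/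
/-!
Write `q = a r + b p` with weights `a = (1 - λ) q / r`, `b = λ q / p` summing to one. Hölder's
inequality interpolates `∫ φ^q ≤ (∫ φ^r)^a (∫ φ^p)^b`, and the Gagliardo–Nirenberg–Sobolev
inequality bounds `(∫ φ^p)^b` by a multiple of `(∫ |∇φ|²)^θ` with `θ = λ q / 2`. The condition on
`q / r` is exactly `θ < 1`, so Young's inequality `X^θ Y^(1-θ) ≤ ε X + C_ε Y` with
`Y = (∫ φ^r)^(γ / r)` absorbs the gradient term with an arbitrarily small coefficient.
-/

open MeasureTheory Real

theorem exists_rpow_mul_rpow_le_add {θ ε : ℝ} (hθ0 : 0 < θ) (hθ1 : θ < 1) (hε : 0 < ε) :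
    ∃ C > 0, ∀ x y : ℝ, 0 ≤ x → 0 ≤ y → x ^ θ * y ^ (1 - θ) ≤ ε * x + C * y := by
  have hθ1' : 0 < 1 - θ := sub_pos.mpr hθ1
  set K := (θ / ε) ^ (θ / (1 - θ))
  have hbalance : (ε / θ) ^ θ * K ^ (1 - θ) = 1 := by
    have hinv : ε / θ * (θ / ε) = 1 := by field_simp
    rw [← rpow_mul (by positivity), div_mul_cancel₀ _ hθ1'.ne', ← mul_rpow (by positivity)
      (by positivity), hinv, one_rpow]
  refine ⟨(1 - θ) * K, by positivity, fun x y hx hy => ?_⟩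
  calc x ^ θ * y ^ (1 - θ) = (ε / θ * x) ^ θ * (K * y) ^ (1 - θ) := by
        rw [mul_rpow (by positivity) hx, mul_rpow (by positivity) hy]
        linear_combination (-(x ^ θ * y ^ (1 - θ))) * hbalance
    _ ≤ θ * (ε / θ * x) + (1 - θ) * (K * y) :=
        geom_mean_le_arith_mean2_weighted hθ0.le hθ1'.le (by positivity) (by positivity)
          (by ring)
    _ = ε * x + (1 - θ) * K * y := by field_simp

theorem integral_rpow_mul_add_mul_le {X : Type*} [TopologicalSpace X] [MeasurableSpace X]
    [OpensMeasurableSpace X] {μ : Measure X} [IsFiniteMeasureOnCompacts μ] {g : X → ℝ}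
    (hg : Continuous g) (hgs : HasCompactSupport g) (hg0 : ∀ x, 0 ≤ g x)
    {a b r p : ℝ} (ha : 0 < a) (hb : 0 < b) (hab : a + b = 1) (hr : 0 < r) (hp : 0 < p) :
    ∫ x, g x ^ (a * r + b * p) ∂μ ≤ (∫ x, g x ^ r ∂μ) ^ a * (∫ x, g x ^ p ∂μ) ^ b := by
  have hmemLp : ∀ {t : ℝ}, 0 < t → ∀ s, MemLp (fun x => g x ^ t) s μ := fun ht _ =>
    ((continuous_rpow_const ht.le).comp hg).memLp_of_hasCompactSupport (hgs.rpow_const ht.ne')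
  have hHolder := integral_mul_le_Lp_mul_Lq_of_nonneg (μ := μ)
    (Real.HolderConjugate.inv_inv ha hb hab)
    (Filter.Eventually.of_forall fun x => rpow_nonneg (hg0 x) (a * r))
    (Filter.Eventually.of_forall fun x => rpow_nonneg (hg0 x) (b * p))
    (hmemLp (by positivity) _) (hmemLp (by positivity) _)
  have hr' : a * r * a⁻¹ = r := by field_simp
  have hp' : b * p * b⁻¹ = p := by field_simp
  simp only [← rpow_mul (hg0 _), one_div, inv_inv, hr', hp'] at hHolder
  simpa only [rpow_add' (hg0 _) (by positivity : a * r + b * p ≠ 0)] using hHolder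

theorem Continuous.eLpNorm_ofReal_eq_of_hasCompactSupport {X F : Type*} [TopologicalSpace X]
    [MeasurableSpace X] [OpensMeasurableSpace X] {μ : Measure X} [IsFiniteMeasureOnCompacts μ]
    [NormedAddCommGroup F] {f : X → F} (hf : Continuous f) (hfs : HasCompactSupport f) {u : ℝ}
    (hu : 0 < u) :
    eLpNorm f (ENNReal.ofReal u) μ = ENNReal.ofReal ((∫ x, ‖f x‖ ^ u ∂μ) ^ u⁻¹) := by
  rw [(hf.memLp_of_hasCompactSupport hfs).eLpNorm_eq_integral_rpow_norm (by simpa using hu)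
    ENNReal.ofReal_ne_top, ENNReal.toReal_ofReal hu.le]

theorem exists_integral_norm_rpow_le_integral_norm_fderiv_rpow {E : Type*}
    [NormedAddCommGroup E] [NormedSpace ℝ E] [MeasurableSpace E] [BorelSpace E]
    [FiniteDimensional ℝ E] (μ : Measure E) [μ.IsAddHaarMeasure] {s t : ℝ} (hs : 1 ≤ s)
    (ht : 0 < t) (hE : 0 < Module.finrank ℝ E)
    (hst : t⁻¹ = s⁻¹ - (Module.finrank ℝ E : ℝ)⁻¹) :
    ∃ C > 0, ∀ φ : E → ℝ, ContDiff ℝ 1 φ → HasCompactSupport φ →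
      (∫ x, ‖φ x‖ ^ t ∂μ) ^ t⁻¹ ≤ C * (∫ x, ‖fderiv ℝ φ x‖ ^ s ∂μ) ^ s⁻¹ := by
  have hs0 : 0 < s := one_pos.trans_le hs
  set C := SNormLESNormFDerivOfEqConst ℝ μ s.toNNReal
  refine ⟨C + 1, by positivity, fun φ hφ hφs => ?_⟩
  have hGNS : eLpNorm φ (ENNReal.ofReal t) μ ≤ C * eLpNorm (fderiv ℝ φ) (ENNReal.ofReal s) μ :=
    eLpNorm_le_eLpNorm_fderiv_of_eq μ hφ hφs (by simpa using hs) hE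
      (by simpa [ht.le, hs0.le] using hst)
  rw [hφ.continuous.eLpNorm_ofReal_eq_of_hasCompactSupport hφs ht,
    (hφ.continuous_fderiv one_ne_zero).eLpNorm_ofReal_eq_of_hasCompactSupport (hφs.fderiv ℝ) hs0,
    ← ENNReal.ofReal_coe_nnreal, ← ENNReal.ofReal_mul C.coe_nonneg,
    ENNReal.ofReal_le_ofReal_iff (by positivity)] at hGNS
  exact hGNS.trans (by gcongr; linarith)

theorem interpolation_exponent_spec {p q r lam : ℝ} (hr : 0 < r) (hrq : r < q) (hqp : q < p)
    (hqr : q / r < 2 / r + 1 - 2 / p) (hlam : lam = (1 / r - 1 / q) / (1 / r - 1 / p)) :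
    0 < lam ∧ lam < 1 ∧ lam * q < 2 ∧ (1 - lam) * q / r + lam * q / p = 1 := by
  have hq : 0 < q := hr.trans hrq
  have hqr' : 1 / q < 1 / r := one_div_lt_one_div_of_lt hr hrq
  have hpq' : 1 / p < 1 / q := one_div_lt_one_div_of_lt hq hqp
  have hd : 0 < 1 / r - 1 / p := by linarith
  have hlam_d : lam * (1 / r - 1 / p) = 1 / r - 1 / q := by
    rw [hlam, div_mul_cancel₀ _ hd.ne']
  refine ⟨by rw [hlam]; exact div_pos (by linarith) hd, by rw [hlam, div_lt_one hd]; linarith,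
    ?_, ?_⟩
  · have h : lam * q * (1 / r - 1 / p) < 2 * (1 / r - 1 / p) := by
      rw [mul_right_comm, hlam_d, sub_mul, one_div_mul_cancel hq.ne']
      ring_nf at hqr ⊢
      linarith
    exact lt_of_mul_lt_mul_right h hd.le
  · rw [show (1 - lam) * q / r + lam * q / p = q * (1 / r - lam * (1 / r - 1 / p)) by ring,
      hlam_d]
    field_simp
    ring

theorem exists_integral_rpow_le_integral_norm_fderiv_rpow_mul {E : Type*}
    [NormedAddCommGroup E] [NormedSpace ℝ E] [MeasurableSpace E] [BorelSpace E]
    [FiniteDimensional ℝ E] (μ : Measure E) [μ.IsAddHaarMeasure] {s p r a b : ℝ} (hs : 1 ≤ s)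
    (hp : 0 < p) (hE : 0 < Module.finrank ℝ E) (hsp : p⁻¹ = s⁻¹ - (Module.finrank ℝ E : ℝ)⁻¹)
    (hr : 0 < r) (ha : 0 < a) (hb : 0 < b) (hab : a + b = 1) :
    ∃ K > 0, ∀ φ : E → ℝ, ContDiff ℝ 1 φ → HasCompactSupport φ → (∀ x, 0 ≤ φ x) →
      ∫ x, φ x ^ (a * r + b * p) ∂μ ≤
        K * ((∫ x, ‖fderiv ℝ φ x‖ ^ s ∂μ) ^ (b * p / s) * (∫ x, φ x ^ r ∂μ) ^ a) := by
  obtain ⟨S, hS0, hS⟩ := exists_integral_norm_rpow_le_integral_norm_fderiv_rpow μ hs hp hE hsp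
  refine ⟨S ^ (b * p), by positivity, fun φ hφ hφs hφ0 => ?_⟩
  have hG : 0 ≤ ∫ x, ‖fderiv ℝ φ x‖ ^ s ∂μ := integral_nonneg fun x => by positivity
  have hIp : 0 ≤ ∫ x, φ x ^ p ∂μ := integral_nonneg fun x => rpow_nonneg (hφ0 x) p
  have hSobolev := hS φ hφ hφs
  simp only [norm_of_nonneg (hφ0 _)] at hSobolev
  have hIp_le : (∫ x, φ x ^ p ∂μ) ^ b ≤ S ^ (b * p) * (∫ x, ‖fderiv ℝ φ x‖ ^ s ∂μ) ^ (b * p / s) :=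
    calc (∫ x, φ x ^ p ∂μ) ^ b = ((∫ x, φ x ^ p ∂μ) ^ p⁻¹) ^ (b * p) := by
          rw [← rpow_mul hIp]; field_simp
      _ ≤ (S * (∫ x, ‖fderiv ℝ φ x‖ ^ s ∂μ) ^ s⁻¹) ^ (b * p) := by gcongr
      _ = S ^ (b * p) * (∫ x, ‖fderiv ℝ φ x‖ ^ s ∂μ) ^ (b * p / s) := by
          rw [mul_rpow hS0.le (by positivity), ← rpow_mul hG]; ring_nf
  calc ∫ x, φ x ^ (a * r + b * p) ∂μ
      ≤ (∫ x, φ x ^ r ∂μ) ^ a * (∫ x, φ x ^ p ∂μ) ^ b :=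
        integral_rpow_mul_add_mul_le hφ.continuous hφs hφ0 ha hb hab hr hp
    _ ≤ (∫ x, φ x ^ r ∂μ) ^ a * (S ^ (b * p) * (∫ x, ‖fderiv ℝ φ x‖ ^ s ∂μ) ^ (b * p / s)) :=
        mul_le_mul_of_nonneg_left hIp_le
          (rpow_nonneg (integral_nonneg fun x => rpow_nonneg (hφ0 x) r) a)
    _ = _ := by ring

theorem inv_eq_inv_two_sub_inv_of_eq {n : ℕ} (hn : 3 ≤ n) {p : ℝ} (hp : p = 2 * n / (n - 2)) :
    p⁻¹ = 2⁻¹ - (n : ℝ)⁻¹ := by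
  have : (3 : ℝ) ≤ n := by exact_mod_cast hn
  rw [hp]
  field_simp

theorem div_mul_one_sub_eq_of_eq {q r lam gam : ℝ} (hr : 0 < r) (hlamq : lam * q < 2)
    (hgam : gam = 2 * (1 - lam) * q / (2 - lam * q)) :
    gam / r * (1 - lam * q / 2) = (1 - lam) * q / r := by
  rw [hgam]
  field_simp [(by linarith : 2 - lam * q ≠ 0)]

/-- Gagliardo–Nirenberg type inequality (Lemma 3.1 of the paper, whole-space setting):
for admissible `r < q < p` and every `ε₁, ε₂ > 0` there is `C₀ > 0` such that for all
nonnegative `C¹` compactly supported `φ`,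
`‖φ‖_{L^q}^q ≤ C₀‖φ‖_{L^r}^γ + ε₁‖∇φ‖_{L²}² + ε₂‖φ‖_{L²}²`. -/
theorem stmt_18 (n : ℕ) (hn : 3 ≤ n) (p q r lam gam : ℝ)
    (hp : p = 2 * n / (n - 2))
    (hr1 : 1 ≤ r) (hrq : r < q) (hqp : q < p)
    (hqr : q / r < 2 / r + 1 - 2 / p)
    (hlam : lam = (1 / r - 1 / q) / (1 / r - 1 / p))
    (hgam : gam = 2 * (1 - lam) * q / (2 - lam * q)) :
    ∀ ε₁ ε₂ : ℝ, 0 < ε₁ → 0 < ε₂ → ∃ C₀ : ℝ, 0 < C₀ ∧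
      ∀ φ : (Fin n → ℝ) → ℝ, ContDiff ℝ 1 φ → HasCompactSupport φ →
        (∀ x, 0 ≤ φ x) →
        ∫ x, φ x ^ q ≤ C₀ * (∫ x, φ x ^ r) ^ (gam / r)
          + ε₁ * (∫ x, ‖fderiv ℝ φ x‖ ^ (2 : ℝ))
          + ε₂ * (∫ x, φ x ^ (2 : ℝ)) := by
  intro ε₁ ε₂ hε₁ hε₂
  have hr : 0 < r := one_pos.trans_le hr1
  have hq : 0 < q := hr.trans hrq
  have hp0 : 0 < p := hq.trans hqp
  obtain ⟨hlam0, hlam1, hlamq, hsum⟩ := interpolation_exponent_spec hr hrq hqp hqr hlam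
  obtain ⟨K, hK0, hGN⟩ := exists_integral_rpow_le_integral_norm_fderiv_rpow_mul
    (volume : Measure (Fin n → ℝ)) one_le_two hp0 (by rw [Module.finrank_fin_fun]; omega)
    (by rw [Module.finrank_fin_fun]; exact inv_eq_inv_two_sub_inv_of_eq hn hp) hr
    (div_pos (mul_pos (sub_pos.mpr hlam1) hq) hr) (by positivity) hsum
  rw [show (1 - lam) * q / r * r + lam * q / p * p = q by field_simp; ring,
    show lam * q / p * p / 2 = lam * q / 2 by field_simp] at hGN
  obtain ⟨C, hC0, hYoung⟩ := exists_rpow_mul_rpow_le_add (θ := lam * q / 2) (by positivity)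
    (by linarith) (div_pos hε₁ hK0)
  refine ⟨K * C, by positivity, fun φ hφ hφs hφ0 => ?_⟩
  have hIr : 0 ≤ ∫ x, φ x ^ r := integral_nonneg fun x => rpow_nonneg (hφ0 x) r
  calc ∫ x, φ x ^ q
      ≤ K * ((∫ x, ‖fderiv ℝ φ x‖ ^ (2 : ℝ)) ^ (lam * q / 2) *
          ((∫ x, φ x ^ r) ^ (gam / r)) ^ (1 - lam * q / 2)) := by
        rw [← rpow_mul hIr, div_mul_one_sub_eq_of_eq hr hlamq hgam]
        exact hGN φ hφ hφs hφ0
    _ ≤ K * (ε₁ / K * (∫ x, ‖fderiv ℝ φ x‖ ^ (2 : ℝ)) + C * (∫ x, φ x ^ r) ^ (gam / r)) := by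
        gcongr
        exact hYoung _ _ (integral_nonneg fun x => by positivity) (by positivity)
    _ = K * C * (∫ x, φ x ^ r) ^ (gam / r) + ε₁ * (∫ x, ‖fderiv ℝ φ x‖ ^ (2 : ℝ)) := by
        field_simp
        ring
    _ ≤ _ := le_add_of_nonneg_right
        (mul_nonneg hε₂.le (integral_nonneg fun x => rpow_nonneg (hφ0 x) 2))
end
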